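/- Let Φ=(f_1,…,f_n) be a polynomial automorphism of K^n, with deg_1 the standard homogeneous degree. Then the ideal of relations I equals (0) if and only if Φ is affine, i.e. deg_1(f_i) = 1 for all i = 1,…,n. -/

import Mathlib

open MvPolynomial

/-- Leading term of a polynomial with respect to the standard homogeneous degree. -/
noncomputable def ltStd {K : Type*} [CommSemiring K] {n : ℕ}
    (p : MvPolynomial (Fin n) K) : MvPolynomial (Fin n) K :=
  homogeneousComponent p.totalDegree p

/-- The ideal of relations between the leading terms (for the standard degree) of the
components of an automorphism. -/
noncomputable def relIdealStd {K : Type*} [CommRing K] {n : ℕ}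
    (f : Fin n → MvPolynomial (Fin n) K) : Ideal (MvPolynomial (Fin n) K) :=
  RingHom.ker
    (aeval (fun i => ltStd (f i)) : MvPolynomial (Fin n) K →ₐ[K] MvPolynomial (Fin n) K)

/-! With weights `wᵢ = deg fᵢ`, the homogeneous part of `P(f)` in degree `M = deg_w P` is the
`w`-weighted top component `P_M` evaluated at the leading terms `f̄`. So if the `f̄ᵢ` are
algebraically independent, `deg_w P ≤ deg P(f)` for every `P ≠ 0`. For the components `gᵢ` of the
inverse automorphism, `gᵢ(f) = Xᵢ` then forces `deg_w gᵢ ≤ 1`: the inverse only involves the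
variables with `wⱼ ≤ 1`, and since it is surjective these are all of them. Conversely, for
affine `f` we have `f̄ᵢ = fᵢ - fᵢ(0)`, so `P ↦ P(f̄)` is `P ↦ P(f)` after a translation, hence
injective. -/

namespace MvPolynomial

open Finsupp

variable {σ τ R : Type*}

section CommSemiring

variable [CommSemiring R]

theorem degree_le_of_mem_support {p : MvPolynomial σ R} {s : σ →₀ ℕ} (h : s ∈ p.support) :
    s.degree ≤ p.totalDegree :=
  le_totalDegree h

theorem homogeneousComponent_add_mul {p q : MvPolynomial σ R} {a b : ℕ}
    (hp : p.totalDegree ≤ a) (hq : q.totalDegree ≤ b) :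
    homogeneousComponent (a + b) (p * q) =
      homogeneousComponent a p * homogeneousComponent b q := by
  classical
  ext s
  simp only [coeff_homogeneousComponent, coeff_mul]
  split_ifs with hs
  · refine Finset.sum_congr rfl fun uv huv => ?_
    rw [Finset.HasAntidiagonal.mem_antidiagonal] at huv
    by_cases hu : coeff uv.1 p = 0
    · simp [hu]
    by_cases hv : coeff uv.2 q = 0
    · simp [hv]
    have hdu := (degree_le_of_mem_support (mem_support_iff.2 hu)).trans hp
    have hdv := (degree_le_of_mem_support (mem_support_iff.2 hv)).trans hq
    have hsum : uv.1.degree + uv.2.degree = a + b := by rw [← map_add, huv, hs]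
    rw [if_pos (by omega), if_pos (by omega)]
  · refine (Finset.sum_eq_zero fun uv huv => ?_).symm
    rw [Finset.HasAntidiagonal.mem_antidiagonal] at huv
    have hsum : uv.1.degree + uv.2.degree = s.degree := by rw [← map_add, huv]
    split_ifs <;> first | omega | simp

theorem homogeneousComponent_sum_prod {ι : Type*} (t : Finset ι) (p : ι → MvPolynomial σ R)
    (d : ι → ℕ) (hp : ∀ i ∈ t, (p i).totalDegree ≤ d i) :
    homogeneousComponent (∑ i ∈ t, d i) (∏ i ∈ t, p i) =
      ∏ i ∈ t, homogeneousComponent (d i) (p i) := by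
  induction t using Finset.cons_induction with
  | empty => simp
  | cons j t hj ih =>
    rw [Finset.forall_mem_cons] at hp
    have ht : (∏ i ∈ t, p i).totalDegree ≤ ∑ i ∈ t, d i :=
      (totalDegree_finsetProd t p).trans (Finset.sum_le_sum hp.2)
    rw [Finset.sum_cons, Finset.prod_cons, Finset.prod_cons,
      homogeneousComponent_add_mul hp.1 ht, ih hp.2]

theorem homogeneousComponent_mul_pow {p : MvPolynomial σ R} {a : ℕ} (hp : p.totalDegree ≤ a)
    (k : ℕ) : homogeneousComponent (k * a) (p ^ k) = homogeneousComponent a p ^ k := by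
  simpa using homogeneousComponent_sum_prod (Finset.range k) (fun _ => p) (fun _ => a)
    (fun _ _ => hp)

theorem totalDegree_aeval_monomial_le (f : σ → MvPolynomial τ R) (s : σ →₀ ℕ) (c : R) :
    (aeval f (monomial s c)).totalDegree ≤ weight (fun i => (f i).totalDegree) s := by
  rw [aeval_monomial, algebraMap_eq, weight_apply]
  refine (totalDegree_mul _ _).trans ?_
  rw [totalDegree_C, zero_add]
  exact (totalDegree_finsetProd _ _).trans (Finset.sum_le_sum fun i _ => totalDegree_pow _ _)

theorem homogeneousComponent_aeval_monomial (f : σ → MvPolynomial τ R) (s : σ →₀ ℕ) (c : R) :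
    homogeneousComponent (weight (fun i => (f i).totalDegree) s) (aeval f (monomial s c)) =
      aeval (fun i => homogeneousComponent (f i).totalDegree (f i)) (monomial s c) := by
  rw [aeval_monomial, aeval_monomial, algebraMap_eq, homogeneousComponent_C_mul, weight_apply]
  congr 1
  simp only [Finsupp.prod, Finsupp.sum, smul_eq_mul]
  rw [homogeneousComponent_sum_prod _ _ _ fun i _ => totalDegree_pow _ _]
  exact Finset.prod_congr rfl fun i _ => homogeneousComponent_mul_pow le_rfl _

theorem homogeneousComponent_aeval_of_weightedTotalDegree_le (f : σ → MvPolynomial τ R)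
    {P : MvPolynomial σ R} {M : ℕ} (hP : weightedTotalDegree (fun i => (f i).totalDegree) P ≤ M) :
    homogeneousComponent M (aeval f P) =
      aeval (fun i => homogeneousComponent (f i).totalDegree (f i))
        (weightedHomogeneousComponent (fun i => (f i).totalDegree) M P) := by
  classical
  rw [weightedHomogeneousComponent_apply, map_sum, Finset.sum_filter]
  conv_lhs => rw [P.as_sum, map_sum, map_sum]
  refine Finset.sum_congr rfl fun s hs => ?_
  have hsM := (le_weightedTotalDegree _ hs).trans hP
  split_ifs with h
  · rw [← h, homogeneousComponent_aeval_monomial]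
  · exact homogeneousComponent_eq_zero _ _
      ((totalDegree_aeval_monomial_le f s _).trans_lt (lt_of_le_of_ne hsM h))

theorem weightedHomogeneousComponent_weightedTotalDegree_ne_zero (w : σ → ℕ)
    {P : MvPolynomial σ R} (hP : P ≠ 0) :
    weightedHomogeneousComponent w (weightedTotalDegree w P) P ≠ 0 := by
  classical
  obtain ⟨s, hs, hsP⟩ : ∃ s ∈ P.support, weightedTotalDegree w P = weight w s :=
    Finset.exists_mem_eq_sup P.support (support_nonempty.2 hP) (weight w)
  intro h
  have := coeff_weightedHomogeneousComponent (w := w) (weightedTotalDegree w P) P s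
  rw [h, coeff_zero, if_pos (hsP.symm : weight w s = weightedTotalDegree w P)] at this
  exact mem_support_iff.1 hs this.symm

theorem weightedTotalDegree_le_totalDegree_aeval {f : σ → MvPolynomial τ R}
    (hf : Function.Injective (aeval (R := R) fun i => homogeneousComponent (f i).totalDegree (f i)))
    {P : MvPolynomial σ R} (hP : P ≠ 0) :
    weightedTotalDegree (fun i => (f i).totalDegree) P ≤ (aeval f P).totalDegree := by
  by_contra! hlt
  refine weightedHomogeneousComponent_weightedTotalDegree_ne_zero (fun i => (f i).totalDegree) hP
    (hf ?_)
  rw [map_zero, ← homogeneousComponent_aeval_of_weightedTotalDegree_le f le_rfl]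
  exact homogeneousComponent_eq_zero _ _ hlt

theorem mem_supported_of_weightedTotalDegree_le {w : σ → ℕ} {p : MvPolynomial σ R} {m : ℕ}
    (hp : weightedTotalDegree w p ≤ m) : p ∈ supported R {j | w j ≤ m} := by
  rw [mem_supported]
  intro j hj
  obtain ⟨s, hs, hjs⟩ := (mem_vars_iff_mem_support j).1 hj
  exact (le_weight_of_ne_zero' w (Finsupp.mem_support_iff.1 hjs)).trans
    ((le_weightedTotalDegree w hs).trans hp)

theorem totalDegree_pos_of_injective_aeval [Nontrivial R] {f : σ → MvPolynomial τ R}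
    (hf : Function.Injective (aeval (R := R) f)) (i : σ) : 0 < (f i).totalDegree := by
  rw [Nat.pos_iff_ne_zero, Ne, totalDegree_eq_zero_iff_eq_C]
  intro h
  have : (X i : MvPolynomial σ R) = C (coeff 0 (f i)) :=
    hf (by rw [aeval_X, aeval_C, algebraMap_eq, ← h])
  simpa using congrArg totalDegree this

theorem totalDegree_le_one_of_weightedTotalDegree_le_totalDegree_aeval [Nontrivial R]
    {f : σ → MvPolynomial σ R} (hf : Function.Bijective (aeval (R := R) f))
    (hdeg : ∀ P ≠ 0,
      weightedTotalDegree (fun i => (f i).totalDegree) P ≤ (aeval (R := R) f P).totalDegree)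
    (k : σ) : (f k).totalDegree ≤ 1 := by
  set e := AlgEquiv.ofBijective (aeval f) hf
  set S := supported R {j | (f j).totalDegree ≤ 1}
  have hgen : ∀ i, e.symm (X i) ∈ S := fun i => by
    refine mem_supported_of_weightedTotalDegree_le ?_
    have := hdeg (e.symm (X i)) ((map_ne_zero_iff _ e.symm.injective).2 (X_ne_zero i))
    rwa [← AlgEquiv.ofBijective_apply (aeval f) hf, e.apply_symm_apply, totalDegree_X] at this
  have hrange : (e.symm : MvPolynomial σ R →ₐ[R] MvPolynomial σ R).range ≤ S := by
    rw [aeval_unique (e.symm : MvPolynomial σ R →ₐ[R] MvPolynomial σ R), aeval_range]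
    exact Algebra.adjoin_le (Set.range_subset_iff.2 hgen)
  have hXk : X k ∈ S := hrange ⟨e (X k), e.symm_apply_apply (X k)⟩
  exact (X_mem_supported (s := {j | (f j).totalDegree ≤ 1})).1 hXk

end CommSemiring

section CommRing

variable [CommRing R]

theorem homogeneousComponent_one_of_totalDegree_eq_one {p : MvPolynomial σ R}
    (hp : p.totalDegree = 1) : homogeneousComponent 1 p = p - C (coeff 0 p) := by
  have := sum_homogeneousComponent p
  rw [hp, Finset.sum_range_succ, Finset.sum_range_one, homogeneousComponent_zero] at this
  exact eq_sub_of_add_eq' this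

theorem injective_aeval_X_sub_C (c : σ → R) :
    Function.Injective (aeval (R := R) fun i => X i - C (c i) : MvPolynomial σ R → _) := by
  let φ : MvPolynomial σ R →ₐ[R] MvPolynomial σ R := aeval fun i => X i + C (c i)
  have : φ.comp (aeval fun i => X i - C (c i)) = AlgHom.id R (MvPolynomial σ R) :=
    algHom_ext fun i => by
      rw [AlgHom.comp_apply, aeval_X, map_sub, aeval_X, aeval_C, algebraMap_eq, AlgHom.id_apply,
        add_sub_cancel_right]
  exact Function.LeftInverse.injective (g := φ) (AlgHom.congr_fun this)

theorem injective_aeval_homogeneousComponent_of_totalDegree_eq_one {f : σ → MvPolynomial τ R}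
    (hf : Function.Injective (aeval (R := R) f)) (h1 : ∀ i, (f i).totalDegree = 1) :
    Function.Injective (aeval (R := R) fun i => homogeneousComponent (f i).totalDegree (f i)) := by
  have : (aeval fun i => homogeneousComponent (f i).totalDegree (f i)) =
      (aeval f).comp (aeval fun i => X i - C (coeff 0 (f i))) := algHom_ext fun i => by
    simp [h1 i, homogeneousComponent_one_of_totalDegree_eq_one (h1 i)]
  rw [this]
  exact hf.comp (injective_aeval_X_sub_C _)

end CommRing

end MvPolynomial

theorem stmt9_general {K : Type*} [Field K]
    {n : ℕ} (f : Fin n → MvPolynomial (Fin n) K)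
    (hf : Function.Bijective
      ⇑(aeval f : MvPolynomial (Fin n) K →ₐ[K] MvPolynomial (Fin n) K)) :
    relIdealStd f = ⊥ ↔ ∀ i, (f i).totalDegree = 1 := by
  rw [relIdealStd, ← RingHom.injective_iff_ker_eq_bot]
  constructor
  · intro hlead i
    refine le_antisymm ?_ (totalDegree_pos_of_injective_aeval hf.1 i)
    exact totalDegree_le_one_of_weightedTotalDegree_le_totalDegree_aeval hf
      (fun P hP => weightedTotalDegree_le_totalDegree_aeval hlead hP) i
  · exact injective_aeval_homogeneousComponent_of_totalDegree_eq_one hf.1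

/-- Corollary: the ideal of relations is zero if and only if the automorphism is
affine, i.e. `deg₁ fᵢ = 1` for all `i`. -/
theorem stmt9 {K : Type*} [Field K] [IsAlgClosed K] [CharZero K]
    {n : ℕ} (f : Fin n → MvPolynomial (Fin n) K)
    (hf : Function.Bijective
      ⇑(aeval f : MvPolynomial (Fin n) K →ₐ[K] MvPolynomial (Fin n) K)) :
    relIdealStd f = ⊥ ↔ ∀ i, (f i).totalDegree = 1 :=
  stmt9_general f hf
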